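/- Let G and H be connected graphs and R ⊆ V(G □ H) such that: (1) for every (g,h) ∈ R, either ({g} × V(H)) ∩ R = {(g,h)} or (V(G) × {h}) ∩ R = {(g,h)}; and (2) both projections π_G(R) and π_H(R) are general position sets of G and H respectively. Then R is a general position set of G □ H. -/

import Mathlib

open SimpleGraph

/-- The interval `I[u,v]`: vertices lying on some `u,v`-geodesic. -/
def gpInterval {V : Type*} (G : SimpleGraph V) (u v : V) : Set V :=
  {x | G.dist u x + G.dist x v = G.dist u v}

/-- `S` is a general position set: no three distinct vertices of `S` lie on a common geodesic. -/
def IsGPSet {V : Type*} (G : SimpleGraph V) (S : Set V) : Prop :=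
  ∀ u ∈ S, ∀ v ∈ S, ∀ w ∈ S, u ≠ v → u ≠ w → v ≠ w → w ∉ gpInterval G u v

private lemma walk_len_lb {V W : Type*} (G : SimpleGraph V) (H : SimpleGraph W)
    (hG : G.Connected) (hH : H.Connected)
    {x y : V × W} (p : (G □ H).Walk x y) :
    G.dist x.1 y.1 + H.dist x.2 y.2 ≤ p.length := by
  induction p with
  | nil => simp
  | @cons a b c h p ih =>
    rcases h with ⟨hadj, heq⟩ | ⟨hadj, heq⟩
    · have hd : G.dist a.1 b.1 ≤ 1 := by
        simpa using G.dist_le (SimpleGraph.Walk.cons hadj SimpleGraph.Walk.nil)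
      have h1 : G.dist a.1 c.1 ≤ 1 + G.dist b.1 c.1 := by
        have := hG.dist_triangle (u := a.1) (v := b.1) (w := c.1)
        omega
      have h2 : H.dist a.2 c.2 = H.dist b.2 c.2 := by rw [heq]
      show G.dist a.1 c.1 + H.dist a.2 c.2 ≤ p.length + 1
      omega
    · have hd : H.dist a.2 b.2 ≤ 1 := by
        simpa using H.dist_le (SimpleGraph.Walk.cons hadj SimpleGraph.Walk.nil)
      have h1 : H.dist a.2 c.2 ≤ 1 + H.dist b.2 c.2 := by
        have := hH.dist_triangle (u := a.2) (v := b.2) (w := c.2)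
        omega
      have h2 : G.dist a.1 c.1 = G.dist b.1 c.1 := by rw [heq]
      show G.dist a.1 c.1 + H.dist a.2 c.2 ≤ p.length + 1
      omega

private lemma boxProd_dist {V W : Type*} (G : SimpleGraph V) (H : SimpleGraph W)
    (hG : G.Connected) (hH : H.Connected) (x y : V × W) :
    (G □ H).dist x y = G.dist x.1 y.1 + H.dist x.2 y.2 := by
  obtain ⟨x1, x2⟩ := x
  obtain ⟨y1, y2⟩ := y
  refine le_antisymm ?_ ?_
  · obtain ⟨p, hp⟩ := (hG x1 y1).exists_walk_length_eq_dist
    obtain ⟨q, hq⟩ := (hH x2 y2).exists_walk_length_eq_dist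
    have := (G □ H).dist_le ((p.boxProdLeft H x2).append (q.boxProdRight G y1))
    rw [SimpleGraph.Walk.length_append] at this
    rw [show (p.boxProdLeft H x2).length = p.length from SimpleGraph.Walk.length_map _ _,
      show (q.boxProdRight G y1).length = q.length from SimpleGraph.Walk.length_map _ _, hp, hq] at this
    exact this
  · obtain ⟨p, hp⟩ := ((hG.boxProd hH) (x1, x2) (y1, y2)).exists_walk_length_eq_dist
    have := walk_len_lb G H hG hH p
    omega

theorem stmt_5 {V W : Type*} [Fintype V] [Fintype W] (G : SimpleGraph V) (H : SimpleGraph W)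
    (hG : G.Connected) (hH : H.Connected) (R : Set (V × W))
    (h1 : ∀ gh ∈ R, ({gh.1} ×ˢ (Set.univ : Set W)) ∩ R = {gh} ∨
                    ((Set.univ : Set V) ×ˢ {gh.2}) ∩ R = {gh})
    (h2 : IsGPSet G (Prod.fst '' R)) (h3 : IsGPSet H (Prod.snd '' R)) :
    IsGPSet (G □ H) R := by
  intro u hu v hv w hw huv huw hvw hmem
  simp only [gpInterval, Set.mem_setOf_eq, boxProd_dist G H hG hH] at hmem
  have tG1 : G.dist u.1 v.1 ≤ G.dist u.1 w.1 + G.dist w.1 v.1 := hG.dist_triangle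
  have tH1 : H.dist u.2 v.2 ≤ H.dist u.2 w.2 + H.dist w.2 v.2 := hH.dist_triangle
  have eG : G.dist u.1 w.1 + G.dist w.1 v.1 = G.dist u.1 v.1 := by omega
  have eH : H.dist u.2 w.2 + H.dist w.2 v.2 = H.dist u.2 v.2 := by omega
  have hu1 : u.1 ∈ Prod.fst '' R := ⟨u, hu, rfl⟩
  have hv1 : v.1 ∈ Prod.fst '' R := ⟨v, hv, rfl⟩
  have hw1 : w.1 ∈ Prod.fst '' R := ⟨w, hw, rfl⟩
  have hu2 : u.2 ∈ Prod.snd '' R := ⟨u, hu, rfl⟩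
  have hv2 : v.2 ∈ Prod.snd '' R := ⟨v, hv, rfl⟩
  have hw2 : w.2 ∈ Prod.snd '' R := ⟨w, hw, rfl⟩
  -- two of the first coordinates coincide, and two of the second
  have c1 : u.1 = v.1 ∨ u.1 = w.1 ∨ v.1 = w.1 := by
    by_contra hc
    push_neg at hc
    exact h2 u.1 hu1 v.1 hv1 w.1 hw1 hc.1 hc.2.1 hc.2.2 eG
  have c2 : u.2 = v.2 ∨ u.2 = w.2 ∨ v.2 = w.2 := by
    by_contra hc
    push_neg at hc
    exact h3 u.2 hu2 v.2 hv2 w.2 hw2 hc.1 hc.2.1 hc.2.2 eH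
  rcases c1 with h | h | h
  · -- u.1 = v.1 forces w.1 = u.1 = v.1; then second coords all distinct
    have hz : G.dist u.1 v.1 = 0 := by rw [h]; simp
    have hw1u : u.1 = w.1 := by
      have : G.dist u.1 w.1 = 0 := by omega
      exact hG.dist_eq_zero_iff.mp this
    have hne1 : u.2 ≠ v.2 := fun e => huv (Prod.ext h e)
    have hne2 : u.2 ≠ w.2 := fun e => huw (Prod.ext hw1u e)
    have hne3 : v.2 ≠ w.2 := fun e => hvw (Prod.ext (h ▸ hw1u) e)
    exact h3 u.2 hu2 v.2 hv2 w.2 hw2 hne1 hne2 hne3 eH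
  · -- u.1 = w.1, so u.2 ≠ w.2
    have hne2 : u.2 ≠ w.2 := fun e => huw (Prod.ext h e)
    rcases c2 with h' | h' | h'
    · have hz : H.dist u.2 v.2 = 0 := by rw [h']; simp
      have hw2u : u.2 = w.2 := by
        have : H.dist u.2 w.2 = 0 := by omega
        exact hH.dist_eq_zero_iff.mp this
      exact hne2 hw2u
    · exact hne2 h'
    · -- u.1 = w.1 and v.2 = w.2 : use h1 on w
      rcases h1 w hw with hcol | hrow
      · have : u ∈ ({w.1} ×ˢ (Set.univ : Set W)) ∩ R := ⟨⟨Set.mem_singleton_iff.mpr h, trivial⟩, hu⟩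
        rw [hcol] at this
        exact huw this
      · have : v ∈ ((Set.univ : Set V) ×ˢ {w.2}) ∩ R := ⟨⟨trivial, Set.mem_singleton_iff.mpr h'⟩, hv⟩
        rw [hrow] at this
        exact hvw this
  · -- v.1 = w.1, so v.2 ≠ w.2
    have hne2 : v.2 ≠ w.2 := fun e => hvw (Prod.ext h e)
    rcases c2 with h' | h' | h'
    · have hz : H.dist u.2 v.2 = 0 := by rw [h']; simp
      have hw2v : v.2 = w.2 := by
        have : H.dist w.2 v.2 = 0 := by omega
        exact (hH.dist_eq_zero_iff.mp this).symm
      exact hne2 hw2v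
    · -- v.1 = w.1 and u.2 = w.2 : use h1 on w
      rcases h1 w hw with hcol | hrow
      · have : v ∈ ({w.1} ×ˢ (Set.univ : Set W)) ∩ R := ⟨⟨Set.mem_singleton_iff.mpr h, trivial⟩, hv⟩
        rw [hcol] at this
        exact hvw this
      · have : u ∈ ((Set.univ : Set V) ×ˢ {w.2}) ∩ R := ⟨⟨trivial, Set.mem_singleton_iff.mpr h'⟩, hu⟩
        rw [hrow] at this
        exact huw this
    · exact hne2 h'
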